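/- arXiv:1812.06421 — 6 statements merged into one kernel-verified Lean document; each statement's English description precedes it below -/
import Mathlib

section
/- Let X be a compact metric space with X = X_1 ∪ ... ∪ X_n, where each X_i is nonempty and is the attractor of a GIFS F_i of order m (i.e., X_i = ⋃_{f∈F_i} f(X_i^m) for finite families F_i of Lipschitz maps X_i^m → X_i). Suppose there exist Lipschitz maps π_i : X → X_i with π_i(x) = x for x ∈ X_i and max_i (Lip(π_i)·Lip(F_i)) < 1, where Lip(F_i) = max{Lip(f) : f ∈ F_i}. Then there is a finite family H of Lipschitz maps X^m → X with max{Lip(h) : h ∈ H} ≤ max_i (Lip(π_i)·Lip(F_i)) < 1 and X = ⋃_{h∈H} h(X^m); namely, for f ∈ F_i, take h(x_1,...,x_m) := f(π_i(x_1),...,π_i(x_m)). -/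
open Set

namespace LipschitzWith

theorem piMap {ι : Type*} [Fintype ι] {α β : ι → Type*} [∀ i, PseudoEMetricSpace (α i)]
    [∀ i, PseudoEMetricSpace (β i)] {K : NNReal} {g : ∀ i, α i → β i}
    (hg : ∀ i, LipschitzWith K (g i)) : LipschitzWith K (Pi.map g) := fun x y =>
  edist_pi_le_iff.2 fun i =>
    ((hg i) (x i) (y i)).trans (mul_le_mul_right (edist_le_pi_edist x y i) _)

end LipschitzWith

section RetractLift

variable {ι X : Type*} {S : Set X}

def retractLift (r : X → S) (g : (ι → S) → S) : (ι → X) → X :=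
  fun x => g (Pi.map (fun _ => r) x)

theorem LipschitzWith.retractLift [Fintype ι] [PseudoEMetricSpace X] {r : X → S}
    {g : (ι → S) → S} {L P : NNReal} (hg : LipschitzWith L g) (hr : LipschitzWith P r) :
    LipschitzWith (L * P) (retractLift r g) := by
  have h := (LipschitzWith.subtype_val S).comp (hg.comp (LipschitzWith.piMap fun _ => hr))
  rwa [one_mul] at h

theorem range_retractLift {r : X → S} (hr : ∀ (x : X) (hx : x ∈ S), r x = ⟨x, hx⟩)
    (g : (ι → S) → S) : range (retractLift r g) = (↑) '' range g := by
  have hr' : ∀ y : ι → S, Pi.map (fun _ => r) (fun k => (y k : X)) = y := fun y =>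
    funext fun k => hr _ (y k).2
  apply Subset.antisymm
  · rintro _ ⟨x, rfl⟩
    exact mem_image_of_mem _ (mem_range_self _)
  · rintro _ ⟨_, ⟨y, rfl⟩, rfl⟩
    exact ⟨fun k => y k, by rw [retractLift, hr']⟩

end RetractLift

theorem stmt_3_general {X : Type*} [MetricSpace X]
    (n m : ℕ) (Xs : Fin n → Set X)
    (hcov : ∀ x : X, ∃ i, x ∈ Xs i)
    (N : Fin n → ℕ)
    (f : (i : Fin n) → Fin (N i) → ((Fin m → (Xs i)) → (Xs i)))
    (L : Fin n → NNReal)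
    (hLip : ∀ i j, LipschitzWith (L i) (f i j))
    (hatt : ∀ i, (Set.univ : Set (Xs i)) = ⋃ j, Set.range (f i j))
    (π : (i : Fin n) → X → (Xs i))
    (hπ : ∀ (i : Fin n) (x : X) (hx : x ∈ Xs i), π i x = ⟨x, hx⟩)
    (P : Fin n → NNReal)
    (hπLip : ∀ i, LipschitzWith (P i) (π i)) :
    ∃ (N' : ℕ) (h : Fin N' → ((Fin m → X) → X)),
      (∀ j, LipschitzWith (Finset.univ.sup (fun i => P i * L i)) (h j)) ∧
        (Set.univ : Set X) = ⋃ j, Set.range (h j) := by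
  let H : (Σ i, Fin (N i)) → (Fin m → X) → X := fun p => retractLift (π p.1) (f p.1 p.2)
  let e := (Fintype.equivFin (Σ i, Fin (N i))).symm
  have hHLip : ∀ p, LipschitzWith (Finset.univ.sup fun i => P i * L i) (H p) := fun ⟨i, k⟩ =>
    ((hLip i k).retractLift (hπLip i)).weaken <|
      mul_comm (L i) (P i) ▸ Finset.le_sup (f := fun i => P i * L i) (Finset.mem_univ i)
  refine ⟨_, fun j => H (e j), fun j => hHLip (e j), ?_⟩
  have hXs : ∀ i, ⋃ k, range (H ⟨i, k⟩) = Xs i := fun i => by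
    simp only [H, range_retractLift (hπ i), ← image_iUnion, ← hatt, image_univ, Subtype.range_coe]
  rw [e.surjective.iUnion_comp (fun p => range (H p)), iUnion_sigma]
  simp only [hXs]
  exact (eq_univ_of_forall fun x => mem_iUnion.2 (hcov x)).symm

/-- If a compact metric space `X` is the union of attractors
`X i` of GIFSs `f i` of order `m`, and there are Lipschitz retractions
`π i : X → X i` with `max_i (Lip(π i) · Lip(F i)) < 1`, then `X` is the
attractor of a GIFS of order `m` whose Lipschitz constant is at most
`max_i (Lip(π i) · Lip(F i))`. -/
theorem stmt_3 {X : Type*} [MetricSpace X] [CompactSpace X]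
    (n m : ℕ) (Xs : Fin n → Set X)
    (hne : ∀ i, (Xs i).Nonempty)
    (hcov : ∀ x : X, ∃ i, x ∈ Xs i)
    (N : Fin n → ℕ)
    (f : (i : Fin n) → Fin (N i) → ((Fin m → (Xs i)) → (Xs i)))
    (L : Fin n → NNReal)
    (hLip : ∀ i j, LipschitzWith (L i) (f i j))
    (hatt : ∀ i, (Set.univ : Set (Xs i)) = ⋃ j, Set.range (f i j))
    (π : (i : Fin n) → X → (Xs i))
    (hπ : ∀ (i : Fin n) (x : X) (hx : x ∈ Xs i), π i x = ⟨x, hx⟩)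
    (P : Fin n → NNReal)
    (hπLip : ∀ i, LipschitzWith (P i) (π i))
    (hmax : Finset.univ.sup (fun i => P i * L i) < 1) :
    ∃ (N' : ℕ) (h : Fin N' → ((Fin m → X) → X)),
      (∀ j, LipschitzWith (Finset.univ.sup (fun i => P i * L i)) (h j)) ∧
        (Set.univ : Set X) = ⋃ j, Set.range (h j) :=
  stmt_3_general n m Xs hcov N f L hLip hatt π hπ P hπLip
end

section
/- Let X be a compact metrizable space, F a finite family of continuous self-maps of X with X = ⋃_{f∈F} f(X), and assume that for every sequence (f_k) of elements of F, the intersection ⋂_{k∈ℕ} f_1∘...∘f_k(X) is a singleton. Let X/R_c be the quotient of X by the relation identifying points in the same connected component, and for f ∈ F define f̃ : X/R_c → X/R_c by f̃([x]_c) := [f(x)]_c. Then each f̃ is well-defined and continuous, X/R_c = ⋃_{f∈F} f̃(X/R_c), and for every sequence (f̃_k) from {f̃ : f ∈ F}, the intersection ⋂_{k∈ℕ} f̃_1∘...∘f̃_k(X/R_c) is a singleton. -/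
/-- `comps f k = f 0 ∘ f 1 ∘ ... ∘ f k`. -/
def comps {X : Type*} (f : ℕ → X → X) : ℕ → X → X
  | 0 => f 0
  | (k + 1) => comps f k ∘ f (k + 1)

/-- If a compact metrizable `X` is a topological fractal for an
IFS `F` (covering plus singleton fibres), then the quotient `X/R_c` by
connected components is a topological fractal for the induced IFS: the
induced maps are well defined and continuous, their images cover the
quotient, and every fibre of the induced system is a singleton. -/
theorem stmt_6 {X : Type*} [MetricSpace X] [CompactSpace X]
    (n : ℕ) (f : Fin n → X → X)
    (hcont : ∀ i, Continuous (f i))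
    (hcov : (Set.univ : Set X) = ⋃ i, Set.range (f i))
    (hfib : ∀ g : ℕ → Fin n, ∃ x : X,
      (⋂ k, comps (fun j => f (g j)) k '' Set.univ) = {x}) :
    ∃ F' : Fin n → ConnectedComponents X → ConnectedComponents X,
      (∀ i, Continuous (F' i)) ∧
      (∀ i x, F' i (ConnectedComponents.mk x) = ConnectedComponents.mk (f i x)) ∧
      ((Set.univ : Set (ConnectedComponents X)) = ⋃ i, Set.range (F' i)) ∧
      (∀ g : ℕ → Fin n, ∃ c : ConnectedComponents X,
        (⋂ k, comps (fun j => F' (g j)) k '' Set.univ) = {c}) := by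
  have hmkc : Continuous (ConnectedComponents.mk : X → ConnectedComponents X) :=
    continuous_quotient_mk'
  refine ⟨fun i => (hmkc.comp (hcont i)).connectedComponentsLift, fun i =>
    Continuous.connectedComponentsLift_continuous _, fun i x => rfl, ?_, ?_⟩
  · ext c
    simp only [Set.mem_univ, Set.mem_iUnion, Set.mem_range, true_iff]
    obtain ⟨x, rfl⟩ := ConnectedComponents.surjective_coe c
    have : x ∈ (Set.univ : Set X) := Set.mem_univ x
    rw [hcov] at this
    obtain ⟨_, ⟨i, rfl⟩, w, rfl⟩ := this
    exact ⟨i, ConnectedComponents.mk w, rfl⟩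
  · intro g
    obtain ⟨x, hx⟩ := hfib g
    set A : ℕ → Set X := fun k => comps (fun j => f (g j)) k '' Set.univ with hA
    have hcomm : ∀ k, (comps (fun j =>
        (hmkc.comp (hcont (g j))).connectedComponentsLift) k) ∘ ConnectedComponents.mk
        = ConnectedComponents.mk ∘ comps (fun j => f (g j)) k := by
      intro k
      induction k with
      | zero => rfl
      | succ k ih =>
        show (comps _ k ∘ _) ∘ _ = _
        funext y
        have := congrFun ih (f (g (k+1)) y)
        simpa [Function.comp, comps] using this
    have himg : ∀ k, comps (fun j =>
        (hmkc.comp (hcont (g j))).connectedComponentsLift) k '' Set.univ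
        = ConnectedComponents.mk '' A k := by
      intro k
      have hsurj : ConnectedComponents.mk '' (Set.univ : Set X) = Set.univ :=
        Set.image_univ_of_surjective ConnectedComponents.surjective_coe
      rw [← hsurj, ← Set.image_comp, hcomm k, Set.image_comp]
    have hconts : ∀ k, Continuous (comps (fun j => f (g j)) k) := by
      intro k
      induction k with
      | zero => exact hcont _
      | succ k ih => exact ih.comp (hcont _)
    have hAcomp : ∀ k, IsCompact (A k) := fun k =>
      (isCompact_univ.image (hconts k))
    have hAdec : ∀ k, A (k+1) ⊆ A k := by
      intro k y hy
      obtain ⟨z, -, rfl⟩ := hy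
      exact ⟨f (g (k+1)) z, Set.mem_univ _, rfl⟩
    refine ⟨ConnectedComponents.mk x, ?_⟩
    apply Set.eq_singleton_iff_unique_mem.2
    constructor
    · refine Set.mem_iInter.2 fun k => ?_
      rw [himg k]
      exact ⟨x, by
        have : x ∈ ⋂ k, A k := by rw [hx]; rfl
        exact Set.mem_iInter.1 this k, rfl⟩
    · intro y hy
      rw [Set.mem_iInter] at hy
      obtain ⟨z, rfl⟩ := ConnectedComponents.surjective_coe y
      set B : ℕ → Set X := fun k => A k ∩ connectedComponent z with hB
      have hfiber : (ConnectedComponents.mk ⁻¹'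
          {(ConnectedComponents.mk z : ConnectedComponents X)}) = connectedComponent z := by
        ext w
        simp [ConnectedComponents.coe_eq_coe, connectedComponent_eq_iff_mem]
      have hBne : ∀ k, (B k).Nonempty := by
        intro k
        have := hy k
        rw [himg k] at this
        obtain ⟨w, hw, hweq⟩ := this
        refine ⟨w, hw, ?_⟩
        have : w ∈ ConnectedComponents.mk ⁻¹'
            {(ConnectedComponents.mk z : ConnectedComponents X)} := hweq
        rwa [hfiber] at this
      have hBcl : ∀ k, IsClosed (B k) := fun k =>
        ((hAcomp k).isClosed).inter isClosed_connectedComponent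
      have hBdec : ∀ k, B (k+1) ⊆ B k := fun k =>
        Set.inter_subset_inter_left _ (hAdec k)
      obtain ⟨w, hw⟩ := IsCompact.nonempty_iInter_of_sequence_nonempty_isCompact_isClosed
        B hBdec hBne ((hAcomp 0).inter_right isClosed_connectedComponent) hBcl
      rw [Set.mem_iInter] at hw
      have hwA : w ∈ ⋂ k, A k := Set.mem_iInter.2 fun k => (hw k).1
      rw [hx] at hwA
      have hwz : w ∈ connectedComponent z := (hw 0).2
      have : ConnectedComponents.mk w = ConnectedComponents.mk z :=
        ConnectedComponents.coe_eq_coe.2 (connectedComponent_eq_iff_mem.2 hwz)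
      rw [← this, hwA]
end

section
/- Let X be a compact metric space with a distinguished point x_ω and a decomposition X = (⋃_{k∈ℕ} X_k) ∪ X_ω, where all X_k are nonempty, and let b = (b_k)_{k≥0} be positive with M_b := sup b_k/b_{k−1} < 1/25. Assume for all k: dist(X_k, ⋃_{j>k} X_j ∪ X_ω) ≥ b_{k−1} − 2b_k − b_{k+1} and diam(⋃_{k≤j<ω} X_j) ≤ b_{k−1}, and x_ω ∈ closure(⋃_{j≥k} X_j) for every k. Then for every x ∈ X_ω and y ∈ X_k (k ∈ ℕ): d(y, x_ω) ≤ 2 d(x, y) and d(x, x_ω) ≤ 3 d(x, y). -/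
/-- In a `(Λ,b)`-space decomposition `X = (⋃_{k≥1} X k) ∪ Xω`
with separation `dist(X k, ⋃_{j>k} X j ∪ Xω) ≥ b (k-1) − 2 b k − b (k+1)`,
tail diameters `diam(⋃_{k≤j<ω} X j) ≤ b (k-1)` and `xω` in the closure of
every tail union, one has, for `x ∈ Xω` and `y ∈ X k`:
`d(y, xω) ≤ 2 d(x,y)` and `d(x, xω) ≤ 3 d(x,y)`. -/
theorem stmt_10 {X : Type*} [MetricSpace X] [CompactSpace X]
    (Xf : ℕ → Set X) (Xω : Set X) (xω : X) (hxω : xω ∈ Xω)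
    (hne : ∀ k, 1 ≤ k → (Xf k).Nonempty)
    (hcov : ∀ x : X, x ∈ Xω ∨ ∃ k, 1 ≤ k ∧ x ∈ Xf k)
    (b : ℕ → ℝ) (hb : ∀ k, 0 < b k)
    (M : ℝ) (hM : ∀ k, b (k + 1) ≤ M * b k) (hM25 : M < 1 / 25)
    (hdist : ∀ k, 1 ≤ k → ∀ x ∈ Xf k, ∀ y : X,
      ((∃ j, k < j ∧ y ∈ Xf j) ∨ y ∈ Xω) →
        b (k - 1) - 2 * b k - b (k + 1) ≤ dist x y)
    (hdiam : ∀ k, 1 ≤ k → ∀ x y : X,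
      (∃ j, k ≤ j ∧ x ∈ Xf j) → (∃ j, k ≤ j ∧ y ∈ Xf j) → dist x y ≤ b (k - 1))
    (hclos : ∀ k, 1 ≤ k → xω ∈ closure (⋃ j ∈ {j : ℕ | k ≤ j}, Xf j)) :
    ∀ k, 1 ≤ k → ∀ x ∈ Xω, ∀ y ∈ Xf k,
      dist y xω ≤ 2 * dist x y ∧ dist x xω ≤ 3 * dist x y := by
  intro k hk x hx y hy
  have hM0 : 0 < M := by
    have h1 := hM 0
    have h2 := hb 1
    have h3 := hb 0
    nlinarith
  have hbk : b k ≤ M * b (k - 1) := by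
    have := hM (k - 1)
    rwa [Nat.sub_add_cancel hk] at this
  have hbk1 : b (k + 1) ≤ M * (M * b (k - 1)) := by
    have h := hM k
    have h2 : M * b k ≤ M * (M * b (k - 1)) :=
      mul_le_mul_of_nonneg_left hbk hM0.le
    linarith
  have hd : b (k - 1) - 2 * b k - b (k + 1) ≤ dist x y := by
    rw [dist_comm]
    exact hdist k hk y hy x (Or.inr hx)
  have hyc : dist y xω ≤ b (k - 1) := by
    have hsub : (⋃ j ∈ {j : ℕ | k ≤ j}, Xf j) ⊆ Metric.closedBall y (b (k - 1)) := by
      intro z hz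
      simp only [Set.mem_iUnion] at hz
      obtain ⟨j, hj, hzj⟩ := hz
      have := hdiam k hk z y ⟨j, hj, hzj⟩ ⟨k, le_refl k, hy⟩
      simpa [Metric.mem_closedBall, dist_comm] using this
    have := closure_minimal hsub Metric.isClosed_closedBall (hclos k hk)
    simpa [Metric.mem_closedBall, dist_comm] using this
  have hb0 : 0 < b (k - 1) := hb _
  have hkey : b (k - 1) ≤ 2 * (b (k - 1) - 2 * b k - b (k + 1)) := by nlinarith [mul_lt_mul_of_pos_right hM25 hb0, mul_lt_mul_of_pos_left hM25 hM0, mul_pos hM0 hb0]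
  have h1 : dist y xω ≤ 2 * dist x y := by linarith
  refine ⟨h1, ?_⟩
  have := dist_triangle x y xω
  linarith
end

section
/- Let X be a compact metric space, Z ⊆ X nonempty, and b = (b_k)_{k≥0} a positive sequence with λ_b := 25·sup_k(b_k/b_{k−1}) < 1. Suppose X contains pairwise disjoint pieces X_k (k ∈ ℕ ∪ {ω}) covering X with dist(X_k, X_j) ≥ b_{k−1} − 2b_k − b_{k+1} for k < j, and set Z_k := Z ∩ X_k. Suppose for every integer k ≥ 2 there is h_k : Z → X with Lip(h_k) ≤ λ_b/4 and d(h_k(x), h_j(x)) ≤ 2 b_{k−1} for all 2 ≤ k < j < ω and x ∈ Z, and let h_ω(x) := lim_{k→∞} h_k(x). Define F : Z × Z → X by F(x,y) := h_{k+1}(x) when y ∈ Z_k (with ω+1 = ω). Then F is well-defined, Lip(F) ≤ λ_b/2 (with respect to the max metric on Z × Z), and F(Z × Z) = ⋃{h_k(Z) : 2 ≤ k ≤ ω, Z_{k−1} ≠ ∅}. -/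
/-!
The maps `h_{k+2}` and their pointwise limit `h_ω` (Lipschitz maps form a closed set) are all
`25M/4`-Lipschitz, and `F(x, y)` is the one selected by the piece containing `y`; indexing the
pieces by `ℕ∞` puts `h_ω` at `⊤`. For `y ∈ X_k` and `y'` in a later piece, pass through
`h_{k+1}(x')`: this costs `25M/4 · d(x, x') + 2 b_k`, and `b_{k+1} ≤ M b_k` gives
`2 b_k ≤ 25M/4 · (b_{k-1} - 2 b_k - b_{k+1}) ≤ 25M/4 · d(y, y')`.
-/

open Filter

lemma two_mul_le_of_gap_le {M : NNReal} (hM25 : 25 * M < 1) {a b c d : ℝ} (ha : 0 ≤ a)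
    (hb : b ≤ M * a) (hc : c ≤ M * b) (hd : a - 2 * b - c ≤ d) :
    2 * b ≤ (25 * M / 4 : NNReal) * d := by
  have hM : (0 : ℝ) ≤ M := M.2
  have hM1 : 25 * (M : ℝ) < 1 := by exact_mod_cast hM25
  have hc' : c ≤ M * (M * a) := hc.trans (mul_le_mul_of_nonneg_left hb hM)
  push_cast
  nlinarith [mul_nonneg hM ha, mul_nonneg (mul_nonneg hM hM) ha, mul_nonneg hM (mul_nonneg hM ha)]

lemma ENat.forall_lt_of_natCast_of_top {P : ℕ∞ → ℕ∞ → Prop}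
    (hnat : ∀ k m : ℕ, k < m → P k m) (htop : ∀ k : ℕ, P k ⊤) : ∀ i j, i < j → P i j := by
  intro i j hij
  induction i using ENat.recTopCoe with
  | top => exact absurd hij not_top_lt
  | coe k =>
    induction j using ENat.recTopCoe with
    | top => exact htop k
    | coe m => exact hnat k m (by exact_mod_cast hij)

section Gluing

variable {ι α β X : Type*} [LinearOrder ι] [PseudoMetricSpace α] [PseudoMetricSpace β]
  [PseudoMetricSpace X] {g : ι → α → X} {piece : ι → Set β} {r : ι → ℝ} {K : NNReal}

lemma dist_le_two_mul_of_mem_pieces (hg : ∀ i, LipschitzWith K (g i))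
    (hclose : ∀ i j, i < j → ∀ x, dist (g i x) (g j x) ≤ r i)
    (hsep : ∀ i j, i < j → ∀ y ∈ piece i, ∀ y' ∈ piece j, r i ≤ K * dist y y')
    {i j : ι} (hij : i < j) (x x' : α) {y y' : β} (hy : y ∈ piece i) (hy' : y' ∈ piece j) :
    dist (g i x) (g j x') ≤ 2 * K * dist (x, y) (x', y') := by
  have hdx : dist x x' ≤ dist (x, y) (x', y') := by rw [Prod.dist_eq]; exact le_max_left _ _
  have hdy : dist y y' ≤ dist (x, y) (x', y') := by rw [Prod.dist_eq]; exact le_max_right _ _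
  calc dist (g i x) (g j x') ≤ dist (g i x) (g i x') + dist (g i x') (g j x') := dist_triangle _ _ _
    _ ≤ K * dist x x' + K * dist y y' :=
      add_le_add ((hg i).dist_le_mul x x') ((hclose i j hij x').trans (hsep i j hij y hy y' hy'))
    _ ≤ K * dist (x, y) (x', y') + K * dist (x, y) (x', y') := by gcongr
    _ = 2 * K * dist (x, y) (x', y') := by ring

theorem LipschitzWith.of_piecewise (hg : ∀ i, LipschitzWith K (g i))
    (hclose : ∀ i j, i < j → ∀ x, dist (g i x) (g j x) ≤ r i)
    (hsep : ∀ i j, i < j → ∀ y ∈ piece i, ∀ y' ∈ piece j, r i ≤ K * dist y y')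
    (hcover : ∀ y, ∃ i, y ∈ piece i) {F : α × β → X}
    (hF : ∀ i x y, y ∈ piece i → F (x, y) = g i x) : LipschitzWith (2 * K) F := by
  refine LipschitzWith.of_dist_le_mul fun ⟨x, y⟩ ⟨x', y'⟩ => ?_
  obtain ⟨i, hy⟩ := hcover y
  obtain ⟨j, hy'⟩ := hcover y'
  rw [hF i x y hy, hF j x' y' hy']
  push_cast
  rcases lt_trichotomy i j with hij | rfl | hji
  · exact dist_le_two_mul_of_mem_pieces hg hclose hsep hij x x' hy hy'
  · have hdx : dist x x' ≤ dist (x, y) (x', y') := by rw [Prod.dist_eq]; exact le_max_left _ _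
    calc dist (g i x) (g i x') ≤ K * dist x x' := (hg i).dist_le_mul x x'
      _ ≤ 2 * K * dist (x, y) (x', y') := by nlinarith [K.2, dist_nonneg (x := x) (y := x')]
  · rw [dist_comm, dist_comm (x, y)]
    exact dist_le_two_mul_of_mem_pieces hg hclose hsep hji x' x hy' hy

theorem LipschitzWith.of_piecewise_enat {g : ℕ → α → X} {gω : α → X} {piece : ℕ → Set β}
    {pieceω : Set β} {r : ℕ → ℝ} (hg : ∀ k, LipschitzWith K (g k)) (hgω : LipschitzWith K gω)
    (hclose : ∀ k m, k < m → ∀ x, dist (g k x) (g m x) ≤ r k)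
    (hcloseω : ∀ k x, dist (g k x) (gω x) ≤ r k)
    (hsep : ∀ k m, k < m → ∀ y ∈ piece k, ∀ y' ∈ piece m, r k ≤ K * dist y y')
    (hsepω : ∀ k, ∀ y ∈ piece k, ∀ y' ∈ pieceω, r k ≤ K * dist y y')
    (hcover : ∀ y, y ∈ pieceω ∨ ∃ k, y ∈ piece k) {F : α × β → X}
    (hF : ∀ k x y, y ∈ piece k → F (x, y) = g k x)
    (hFω : ∀ x y, y ∈ pieceω → F (x, y) = gω x) : LipschitzWith (2 * K) F := by
  refine LipschitzWith.of_piecewise (g := ENat.recTopCoe gω g)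
    (piece := ENat.recTopCoe pieceω piece) (r := fun i => r i.toNat)
    (fun i => ENat.recTopCoe hgω hg i) ?_ ?_ (fun y => ?_) fun i x y hy => ?_
  · exact ENat.forall_lt_of_natCast_of_top (fun k m hkm => by simpa using hclose k m hkm)
      fun k => by simpa using hcloseω k
  · exact ENat.forall_lt_of_natCast_of_top (fun k m hkm => by simpa using hsep k m hkm)
      fun k => by simpa using hsepω k
  · rcases hcover y with hy | ⟨k, hy⟩
    exacts [⟨⊤, hy⟩, ⟨k, hy⟩]
  · induction i using ENat.recTopCoe with
    | top => exact hFω x y hy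
    | coe k => exact hF k x y hy

end Gluing

lemma range_eq_iUnion_range_of_piecewise {X : Type*} {Z : Set X} {Xf : ℕ → Set X} {Xω : Set X}
    (hcov : ∀ x : X, x ∈ Xω ∨ ∃ k, 1 ≤ k ∧ x ∈ Xf k) {h : ℕ → Z → X} {hω : Z → X}
    {F : Z × Z → X} (hF : ∀ (x y : Z) (k : ℕ), 1 ≤ k → (y : X) ∈ Xf k → F (x, y) = h (k + 1) x)
    (hFω : ∀ x y : Z, (y : X) ∈ Xω → F (x, y) = hω x) :
    Set.range F =
      (⋃ k, ⋃ (_ : 2 ≤ k ∧ (Z ∩ Xf (k - 1)).Nonempty), Set.range (h k)) ∪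
        ⋃ (_ : (Z ∩ Xω).Nonempty), Set.range hω := by
  ext z
  simp only [Set.mem_range, Set.mem_union, Set.mem_iUnion, Prod.exists]
  constructor
  · rintro ⟨x, y, rfl⟩
    rcases hcov y with hy | ⟨k, hk, hy⟩
    · exact .inr ⟨⟨y, y.2, hy⟩, x, (hFω x y hy).symm⟩
    · exact .inl ⟨k + 1, ⟨by omega, y, y.2, by simpa using hy⟩, x, (hF x y k hk hy).symm⟩
  · rintro (⟨k, ⟨hk, w, hwZ, hw⟩, x, rfl⟩ | ⟨⟨w, hwZ, hw⟩, x, rfl⟩)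
    · refine ⟨x, ⟨w, hwZ⟩, ?_⟩
      rw [hF x ⟨w, hwZ⟩ (k - 1) (by omega) hw, Nat.sub_add_cancel (by omega)]
    · exact ⟨x, ⟨w, hwZ⟩, hFω x ⟨w, hwZ⟩ hw⟩

theorem stmt_11_general {X : Type*} [MetricSpace X]
    (Z : Set X)
    (Xf : ℕ → Set X) (Xω : Set X)
    (hcov : ∀ x : X, x ∈ Xω ∨ ∃ k, 1 ≤ k ∧ x ∈ Xf k)
    (b : ℕ → ℝ) (hb : ∀ k, 0 < b k)
    (M : NNReal) (hM : ∀ k, b (k + 1) ≤ (M : ℝ) * b k) (hlam : 25 * M < 1)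
    (hdist : ∀ k j, 1 ≤ k → k < j → ∀ x ∈ Xf k, ∀ y ∈ Xf j,
      b (k - 1) - 2 * b k - b (k + 1) ≤ dist x y)
    (hdistω : ∀ k, 1 ≤ k → ∀ x ∈ Xf k, ∀ y ∈ Xω,
      b (k - 1) - 2 * b k - b (k + 1) ≤ dist x y)
    (h : ℕ → Z → X) (hω : Z → X)
    (hLip : ∀ k, 2 ≤ k → LipschitzWith (25 * M / 4) (h k))
    (hcauchy : ∀ k j, 2 ≤ k → k < j → ∀ x : Z, dist (h k x) (h j x) ≤ 2 * b (k - 1))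
    (hlim : ∀ x : Z, Filter.Tendsto (fun k => h k x) Filter.atTop (nhds (hω x)))
    (F : Z × Z → X)
    (hF : ∀ (x y : Z) (k : ℕ), 1 ≤ k → (y : X) ∈ Xf k → F (x, y) = h (k + 1) x)
    (hFω : ∀ x y : Z, (y : X) ∈ Xω → F (x, y) = hω x) :
    LipschitzWith (25 * M / 2) F ∧
      Set.range F =
        (⋃ k, ⋃ (_ : 2 ≤ k ∧ (Z ∩ Xf (k - 1)).Nonempty), Set.range (h k)) ∪
          ⋃ (_ : (Z ∩ Xω).Nonempty), Set.range hω := by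
  have hLipω : LipschitzWith (25 * M / 4) hω :=
    (isClosed_setOfPred_lipschitzWith _).mem_of_tendsto (tendsto_pi_nhds.2 hlim)
      (eventually_atTop.2 ⟨2, hLip⟩)
  have hcloseω (k : ℕ) (x : Z) : dist (h (k + 2) x) (hω x) ≤ 2 * b (k + 1) :=
    le_of_tendsto (tendsto_const_nhds.dist (hlim x)) <| eventually_atTop.2
      ⟨k + 3, fun j hj => by simpa using hcauchy (k + 2) j (by omega) (by omega) x⟩
  have hsep (k m : ℕ) (hkm : k < m) (y : Z) (hy : (y : X) ∈ Xf (k + 1)) (y' : Z)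
      (hy' : (y' : X) ∈ Xf (m + 1)) : 2 * b (k + 1) ≤ (25 * M / 4 : NNReal) * dist y y' :=
    two_mul_le_of_gap_le hlam (hb k).le (hM k) (hM (k + 1)) <| by
      simpa [Subtype.dist_eq] using (hdist (k + 1) (m + 1) (by omega) (by omega) y hy y' hy' :
        b (k + 1 - 1) - 2 * b (k + 1) - b (k + 2) ≤ _)
  have hsepω (k : ℕ) (y : Z) (hy : (y : X) ∈ Xf (k + 1)) (y' : Z) (hy' : (y' : X) ∈ Xω) :
      2 * b (k + 1) ≤ (25 * M / 4 : NNReal) * dist y y' :=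
    two_mul_le_of_gap_le hlam (hb k).le (hM k) (hM (k + 1)) <| by
      simpa [Subtype.dist_eq] using (hdistω (k + 1) (by omega) y hy y' hy' :
        b (k + 1 - 1) - 2 * b (k + 1) - b (k + 2) ≤ _)
  have hcover (y : Z) : (y : X) ∈ Xω ∨ ∃ k, (y : X) ∈ Xf (k + 1) := by
    rcases hcov y with hy | ⟨k, hk, hy⟩
    exacts [.inl hy, .inr ⟨k - 1, by rwa [Nat.sub_add_cancel hk]⟩]
  have hK2 : 2 * (25 * M / 4) = 25 * M / 2 := by ring
  refine ⟨hK2 ▸ LipschitzWith.of_piecewise_enat (g := fun k => h (k + 2))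
    (piece := fun k => {y : Z | (y : X) ∈ Xf (k + 1)}) (pieceω := {y : Z | (y : X) ∈ Xω})
    (fun k => hLip (k + 2) (by omega)) hLipω
    (fun k m hkm x => by simpa using hcauchy (k + 2) (m + 2) (by omega) (by omega) x) hcloseω
    hsep hsepω hcover (fun k x y hy => hF x y (k + 1) (by omega) hy) hFω,
    range_eq_iUnion_range_of_piecewise hcov hF hFω⟩

/-- Lemma 2.10: given maps `h k : Z → X` (`k ≥ 2`) with
`Lip(h k) ≤ λ_b/4`, `d(h k x, h j x) ≤ 2 b (k-1)` for `2 ≤ k < j`, limit map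
`h_ω`, and the piecewise map `F(x,y) = h (k+1) x` for `y ∈ Z_k := Z ∩ X k`
(`F(x,y) = h_ω x` for `y ∈ Z_ω`), the map `F` is `λ_b/2`-Lipschitz (max
metric on `Z × Z`) and
`F(Z × Z) = ⋃ {h k (Z) : 2 ≤ k ≤ ω, Z_{k-1} ≠ ∅}`. -/
theorem stmt_11 {X : Type*} [MetricSpace X] [CompactSpace X]
    (Z : Set X) (hZ : Z.Nonempty)
    (Xf : ℕ → Set X) (Xω : Set X)
    (hcov : ∀ x : X, x ∈ Xω ∨ ∃ k, 1 ≤ k ∧ x ∈ Xf k)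
    (hdisj : (∀ k j, 1 ≤ k → k < j → Disjoint (Xf k) (Xf j)) ∧
      ∀ k, 1 ≤ k → Disjoint (Xf k) Xω)
    (b : ℕ → ℝ) (hb : ∀ k, 0 < b k)
    (M : NNReal) (hM : ∀ k, b (k + 1) ≤ (M : ℝ) * b k) (hlam : 25 * M < 1)
    (hdist : ∀ k j, 1 ≤ k → k < j → ∀ x ∈ Xf k, ∀ y ∈ Xf j,
      b (k - 1) - 2 * b k - b (k + 1) ≤ dist x y)
    (hdistω : ∀ k, 1 ≤ k → ∀ x ∈ Xf k, ∀ y ∈ Xω,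
      b (k - 1) - 2 * b k - b (k + 1) ≤ dist x y)
    (h : ℕ → Z → X) (hω : Z → X)
    (hLip : ∀ k, 2 ≤ k → LipschitzWith (25 * M / 4) (h k))
    (hcauchy : ∀ k j, 2 ≤ k → k < j → ∀ x : Z, dist (h k x) (h j x) ≤ 2 * b (k - 1))
    (hlim : ∀ x : Z, Filter.Tendsto (fun k => h k x) Filter.atTop (nhds (hω x)))
    (F : Z × Z → X)
    (hF : ∀ (x y : Z) (k : ℕ), 1 ≤ k → (y : X) ∈ Xf k → F (x, y) = h (k + 1) x)
    (hFω : ∀ x y : Z, (y : X) ∈ Xω → F (x, y) = hω x) :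
    LipschitzWith (25 * M / 2) F ∧
      Set.range F =
        (⋃ k, ⋃ (_ : 2 ≤ k ∧ (Z ∩ Xf (k - 1)).Nonempty), Set.range (h k)) ∪
          ⋃ (_ : (Z ∩ Xω).Nonempty), Set.range hω :=
  stmt_11_general Z Xf Xω hcov b hb M hM hlam hdist hdistω h hω hLip hcauchy hlim F hF hFω
end

section
/- Let m ∈ ℕ, C ⊆ ℝ nonempty compact, P ⊆ ℝ nonempty finite, with dist(C, P) ≥ diam(C). If C ∪ P is the attractor of a weak GIFS of order m (finite family of maps f : (C∪P)^m → C∪P with d(f(x),f(y)) < d_m(x,y) for x ≠ y, whose images of (C∪P)^m cover C∪P), then C is the attractor of a weak GIFS of order m on C. -/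
/-!
Collapse `P` onto a point `c₀ ∈ C`: since every point of `P` is at distance at least `diam C` from
`C`, the retraction `C ∪ P → C` fixing `C` and sending `P \ C` to `c₀` is `1`-Lipschitz. A map of
the GIFS on `C ∪ P`, with some coordinates frozen at points of the finite set `P` and followed by
this retraction, is a contractive map `C^m → C`; there are finitely many such maps, and since every
point of `(C ∪ P)^m` arises by freezing coordinates of a point of `C^m`, they still cover `C`.
-/

open Set

/-- Contractive in Edelstein's sense, the contraction condition of a weak GIFS. -/
def Contractive {α β : Type*} [Dist α] [Dist β] (f : α → β) : Prop :=
  ∀ x y, x ≠ y → dist (f x) (f y) < dist x y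

theorem LipschitzWith.comp_contractive {α β γ : Type*} [PseudoMetricSpace α]
    [PseudoMetricSpace β] [PseudoMetricSpace γ] {g : β → γ} {f : α → β}
    (hg : LipschitzWith 1 g) (hf : Contractive f) : Contractive (g ∘ f) := fun x y hxy =>
  (hg.dist_le_mul_of_le le_rfl).trans_lt (by simpa using hf x y hxy)

theorem Contractive.comp_lipschitzWith {α β γ : Type*} [MetricSpace α] [MetricSpace β]
    [PseudoMetricSpace γ] {g : β → γ} {f : α → β}
    (hg : Contractive g) (hf : LipschitzWith 1 f) : Contractive (g ∘ f) := by
  intro x y hxy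
  by_cases hfxy : f x = f y
  · simpa [hfxy] using hxy
  · exact (hg _ _ hfxy).trans_le (by simpa using hf.dist_le_mul x y)

section Retraction

variable {X : Type*} {C P : Set X}

noncomputable def retractUnion (c₀ : C) (a : ↥(C ∪ P)) : C :=
  open Classical in if h : (a : X) ∈ C then ⟨a, h⟩ else c₀

theorem retractUnion_inclusion (c₀ c : C) :
    retractUnion c₀ (inclusion (subset_union_left (t := P)) c) = c := by
  simp [retractUnion]

theorem lipschitzWith_one_retractUnion [PseudoMetricSpace X] (hC : Bornology.IsBounded C)
    (hsep : ∀ c ∈ C, ∀ p ∈ P, Metric.diam C ≤ dist c p) (c₀ : C) :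
    LipschitzWith 1 (retractUnion (P := P) c₀) := by
  have mixed : ∀ a b : ↥(C ∪ P), (a : X) ∈ C → (b : X) ∉ C → dist (a : X) c₀ ≤ dist a b :=
    fun a b ha hb => (Metric.dist_le_diam_of_mem hC ha c₀.2).trans
      (hsep _ ha _ (b.2.resolve_left hb))
  refine LipschitzWith.mk_one fun a b => ?_
  simp only [retractUnion, Subtype.dist_eq]
  split_ifs with ha hb hb
  · exact le_rfl
  · exact mixed a b ha hb
  · rw [dist_comm, dist_comm (a : X)]; exact mixed b a hb ha
  · simp

end Retraction

section Patch

variable {X ι : Type*} {C P : Set X}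

def patch (σ : ι → Option P) (x : ι → C) : ι → ↥(C ∪ P) := fun i =>
  (σ i).elim (inclusion subset_union_left (x i)) (inclusion subset_union_right)

theorem exists_patch_eq (c₀ : C) (z : ι → ↥(C ∪ P)) : ∃ σ x, patch σ x = z := by
  classical
  refine ⟨fun i => if h : (z i : X) ∈ C then none else some ⟨z i, (z i).2.resolve_left h⟩,
    fun i => if h : (z i : X) ∈ C then ⟨z i, h⟩ else c₀, funext fun i => ?_⟩
  by_cases h : (z i : X) ∈ C <;> simp [patch, h]

theorem lipschitzWith_one_patch [PseudoMetricSpace X] [Fintype ι] (σ : ι → Option P) :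
    LipschitzWith 1 (patch (C := C) σ) := by
  refine LipschitzWith.mk_one fun x y => (dist_pi_le_iff dist_nonneg).2 fun i => ?_
  simp only [patch]
  cases σ i with
  | none => exact dist_le_pi_dist x y i
  | some p => simp

end Patch

theorem stmt_12_general (m : ℕ) (C P : Set ℝ)
    (hCne : C.Nonempty) (hCcomp : IsCompact C)
    (hPfin : P.Finite)
    (hsep : ∀ c ∈ C, ∀ p ∈ P, Metric.diam C ≤ dist c p)
    (N : ℕ) (F : Fin N → ((Fin m → (C ∪ P : Set ℝ)) → (C ∪ P : Set ℝ)))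
    (hweak : ∀ j (x y : Fin m → (C ∪ P : Set ℝ)), x ≠ y →
      dist (F j x) (F j y) < dist x y)
    (hatt : (Set.univ : Set (C ∪ P : Set ℝ)) = ⋃ j, Set.range (F j)) :
    ∃ (N' : ℕ) (G : Fin N' → ((Fin m → C) → C)),
      (∀ j (x y : Fin m → C), x ≠ y → dist (G j x) (G j y) < dist x y) ∧
        (Set.univ : Set C) = ⋃ j, Set.range (G j) := by
  obtain ⟨c₀, hc₀⟩ := hCne
  have : Fintype P := hPfin.fintype
  let r : ↥(C ∪ P) → C := retractUnion ⟨c₀, hc₀⟩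
  let G : Fin N × (Fin m → Option P) → (Fin m → C) → C := fun k => r ∘ F k.1 ∘ patch k.2
  let e := Fintype.equivFin (Fin N × (Fin m → Option P))
  refine ⟨_, fun k => G (e.symm k), fun k => ?_, ?_⟩
  · exact ((lipschitzWith_one_retractUnion hCcomp.isBounded hsep _).comp_contractive
      (hweak _)).comp_lipschitzWith (lipschitzWith_one_patch _)
  · refine (eq_univ_of_forall fun c => ?_).symm
    obtain ⟨j, z, hz⟩ := mem_iUnion.1 (hatt ▸ mem_univ (inclusion subset_union_left c))
    obtain ⟨σ, x, rfl⟩ := exists_patch_eq ⟨c₀, hc₀⟩ z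
    exact mem_iUnion.2 ⟨e (j, σ), x, by simp [G, r, hz, retractUnion_inclusion]⟩

/-- If `C ⊆ ℝ` is nonempty compact, `P ⊆ ℝ` nonempty finite,
`dist(C,P) ≥ diam C`, and `C ∪ P` is the attractor of a weak GIFS of order
`m`, then `C` is the attractor of a weak GIFS of order `m` on `C`. -/
theorem stmt_12 (m : ℕ) (C P : Set ℝ)
    (hCne : C.Nonempty) (hCcomp : IsCompact C)
    (hPne : P.Nonempty) (hPfin : P.Finite)
    (hsep : ∀ c ∈ C, ∀ p ∈ P, Metric.diam C ≤ dist c p)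
    (N : ℕ) (F : Fin N → ((Fin m → (C ∪ P : Set ℝ)) → (C ∪ P : Set ℝ)))
    (hweak : ∀ j (x y : Fin m → (C ∪ P : Set ℝ)), x ≠ y →
      dist (F j x) (F j y) < dist x y)
    (hatt : (Set.univ : Set (C ∪ P : Set ℝ)) = ⋃ j, Set.range (F j)) :
    ∃ (N' : ℕ) (G : Fin N' → ((Fin m → C) → C)),
      (∀ j (x y : Fin m → C), x ≠ y → dist (G j x) (G j y) < dist x y) ∧
        (Set.univ : Set C) = ⋃ j, Set.range (G j) :=
  stmt_12_general m C P hCne hCcomp hPfin hsep N F hweak hatt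
end

section
/- Let H be a real Hilbert space, m, n ∈ ℕ, α < 1, and let (K_k) be a sequence of nonempty compact subsets of H converging in the Hausdorff metric to a compact set K. Suppose for each k there exist maps f^k_1,...,f^k_n : (K_k)^m → K_k with Lip(f^k_i) ≤ α (sup metric on powers) and K_k = ⋃_{i=1}^n f^k_i((K_k)^m). Then there exist maps f_1,...,f_n : K^m → H with Lip(f_i) ≤ α, f_i(K^m) ⊆ K, and K = ⋃_{i=1}^n f_i(K^m). Consequently, for fixed n, m, α, the family of attractors of Banach GIFSs of order m with at most n maps and Lipschitz constant ≤ α is closed in the hyperspace K(H) with the Hausdorff metric. -/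
open TopologicalSpace


open TopologicalSpace Filter Metric

private lemma ultra_lim {X : Type*} [TopologicalSpace X] [CompactSpace X]
    (U : Ultrafilter ℕ) (g : ℕ → X) : ∃ z, Filter.Tendsto g U (nhds z) := by
  obtain ⟨z, -, hz⟩ := (isCompact_univ (X := X)).ultrafilter_le_nhds (U.map g)
    (by simp)
  exact ⟨z, hz⟩

private lemma gifs_limit {H : Type*} [MetricSpace H]
    (m n : ℕ) (α : NNReal)
    (Kf : ℕ → Set H) (K : Set H)
    (hKfne : ∀ k, (Kf k).Nonempty) (hKfc : ∀ k, IsCompact (Kf k))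
    (hKne : K.Nonempty) (hKc : IsCompact K)
    (hconv : Filter.Tendsto (fun k => Metric.hausdorffDist (Kf k) K)
      Filter.atTop (nhds 0))
    (fk : (k : ℕ) → Fin n → ((Fin m → (Kf k)) → H))
    (hfkLip : ∀ k i, LipschitzWith α (fk k i))
    (hfkmem : ∀ k i x, fk k i x ∈ Kf k)
    (hfkatt : ∀ k, (⋃ i, Set.range (fk k i)) = Kf k) :
    ∃ f : Fin n → ((Fin m → K) → H),
        (∀ i, LipschitzWith α (f i)) ∧ (∀ i x, f i x ∈ K) ∧
          (⋃ i, Set.range (f i)) = K := by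
  classical
  set d : ℕ → ℝ := fun k => Metric.hausdorffDist (Kf k) K with hd_def
  have hdnn : ∀ k, 0 ≤ d k := fun k => Metric.hausdorffDist_nonneg
  have hfin : ∀ k, EMetric.hausdorffEdist (Kf k) K ≠ ⊤ := fun k =>
    Metric.hausdorffEdist_ne_top_of_nonempty_of_bounded (hKfne k) hKne
      (hKfc k).isBounded hKc.isBounded
  -- nearest points from K into Kf k
  have hP : ∀ (k : ℕ) (x : K), ∃ w ∈ Kf k, dist (x : H) w ≤ d k := by
    intro k x
    obtain ⟨w, hw, hdw⟩ := (hKfc k).exists_infDist_eq_dist (hKfne k) (x : H)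
    refine ⟨w, hw, ?_⟩
    rw [← hdw]
    calc Metric.infDist (x : H) (Kf k) ≤ Metric.hausdorffDist K (Kf k) :=
          Metric.infDist_le_hausdorffDist_of_mem x.2
            (by rw [EMetric.hausdorffEdist_comm]; exact hfin k)
      _ = d k := Metric.hausdorffDist_comm
  have hQ : ∀ (k : ℕ) (w : Kf k), ∃ q ∈ K, dist (w : H) q ≤ d k := by
    intro k w
    obtain ⟨q, hq, hdq⟩ := hKc.exists_infDist_eq_dist hKne (w : H)
    refine ⟨q, hq, ?_⟩
    rw [← hdq]
    exact Metric.infDist_le_hausdorffDist_of_mem w.2 (hfin k)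
  choose p hpmem hpd using hP
  choose q hqmem hqd using hQ
  let pk : (k : ℕ) → K → Kf k := fun k x => ⟨p k x, hpmem k x⟩
  let qk : (k : ℕ) → Kf k → K := fun k w => ⟨q k w, hqmem k w⟩
  -- ultrafilter
  let U : Ultrafilter ℕ := Ultrafilter.of Filter.atTop
  have hU : (U : Filter ℕ) ≤ Filter.atTop := Ultrafilter.of_le _
  have hdU : Filter.Tendsto d U (nhds 0) := hconv.mono_left hU
  haveI : CompactSpace K := isCompact_iff_compactSpace.mp hKc
  -- the approximating values
  let yk : Fin n → (Fin m → K) → (k : ℕ) → Kf k :=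
    fun i x k => ⟨fk k i (fun j => pk k (x j)), hfkmem k i _⟩
  choose F hF using fun (i : Fin n) (x : Fin m → K) =>
    ultra_lim U (fun k => qk k (yk i x k))
  let f : Fin n → ((Fin m → K) → H) := fun i x => (F i x : H)
  -- key convergence
  have hfl : ∀ i x, Filter.Tendsto (fun k => (yk i x k : H)) U (nhds (f i x)) := by
    intro i x
    have h1 : Filter.Tendsto (fun k => ((qk k (yk i x k) : K) : H)) U (nhds (f i x)) :=
      (continuous_subtype_val.tendsto (F i x)).comp (hF i x)
    refine h1.congr_dist ?_
    refine squeeze_zero (fun k => dist_nonneg) (fun k => ?_) hdU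
    exact (dist_comm ((qk k (yk i x k) : H)) _ ▸ hqd k (yk i x k))
  have hLip : ∀ i, LipschitzWith α (f i) := by
    intro i
    apply LipschitzWith.of_dist_le_mul
    intro x x'
    have hb : ∀ k, dist ((yk i x k : H)) ((yk i x' k : H)) ≤ α * (dist x x' + 2 * d k) := by
      intro k
      have h1 := (hfkLip k i).dist_le_mul (fun j => pk k (x j)) (fun j => pk k (x' j))
      refine h1.trans (mul_le_mul_of_nonneg_left ?_ α.2)
      refine (dist_pi_le_iff (by have := hdnn k; positivity)).2 fun j => ?_
      have : dist (pk k (x j)) (pk k (x' j)) = dist (p k (x j)) (p k (x' j)) := rfl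
      rw [this]
      calc dist (p k (x j)) (p k (x' j))
          ≤ dist (p k (x j)) ((x j : H)) + dist ((x j : H)) ((x' j : H))
              + dist ((x' j : H)) (p k (x' j)) := dist_triangle4 _ _ _ _
        _ ≤ d k + dist x x' + d k := by
            gcongr
            · rw [dist_comm]; exact hpd k (x j)
            · exact (dist_le_pi_dist x x' j)
            · exact hpd k (x' j)
        _ = dist x x' + 2 * d k := by ring
    have h1 : Filter.Tendsto (fun k => dist ((yk i x k : H)) ((yk i x' k : H))) U
        (nhds (dist (f i x) (f i x'))) := (hfl i x).dist (hfl i x')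
    have h2 : Filter.Tendsto (fun k => (α : ℝ) * (dist x x' + 2 * d k)) U
        (nhds ((α : ℝ) * dist x x')) := by
      have h3 : Filter.Tendsto (fun k => dist x x' + 2 * d k) U
          (nhds (dist x x' + 2 * 0)) := tendsto_const_nhds.add (hdU.const_mul 2)
      simpa using h3.const_mul (α : ℝ)
    exact le_of_tendsto_of_tendsto' h1 h2 hb
  refine ⟨f, hLip, fun i x => (F i x).2, ?_⟩
  apply Set.Subset.antisymm
  · exact Set.iUnion_subset fun i => Set.range_subset_iff.2 fun x => (F i x).2
  · intro y₀ hy₀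
    set x₀ : K := ⟨y₀, hy₀⟩ with hx₀
    have hex : ∀ k, ∃ (i : Fin n) (w : Fin m → Kf k), fk k i w = p k x₀ := by
      intro k
      have h : p k x₀ ∈ ⋃ i, Set.range (fk k i) := by
        rw [hfkatt k]; exact hpmem k x₀
      simpa [Set.mem_iUnion] using h
    choose idx w hw using hex
    have hidx : ∃ i₀ : Fin n, {k | idx k = i₀} ∈ U := by
      by_contra h
      push_neg at h
      have h2 : ∀ i : Fin n, {k | idx k ≠ i} ∈ U := by
        intro i
        have := (Ultrafilter.compl_mem_iff_notMem (s := {k | idx k = i})).2 (h i)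
        simpa [Set.compl_setOf] using this
      have h3 : (⋂ i : Fin n, {k | idx k ≠ i}) ∈ U := (Filter.iInter_mem).2 h2
      have h4 : (⋂ i : Fin n, {k : ℕ | idx k ≠ i}) = ∅ := by
        ext k; simp
      rw [h4] at h3
      exact Filter.empty_notMem (U : Filter ℕ) h3
    obtain ⟨i₀, hi₀⟩ := hidx
    let zs : ℕ → (Fin m → K) := fun k j => qk k (w k j)
    obtain ⟨z, hz⟩ := ultra_lim U zs
    have hzd : Filter.Tendsto (fun k => dist z (zs k)) U (nhds 0) := by
      have := tendsto_iff_dist_tendsto_zero.mp hz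
      simpa [dist_comm] using this
    -- B : yk i₀ z converges to y₀
    have hB : Filter.Tendsto (fun k => (yk i₀ z k : H)) U (nhds y₀) := by
      rw [tendsto_iff_dist_tendsto_zero]
      have hbound : ∀ᶠ k in (U : Filter ℕ),
          dist ((yk i₀ z k : H)) y₀ ≤ (α : ℝ) * (2 * d k + dist z (zs k)) + d k := by
        filter_upwards [hi₀] with k hk
        have hk' : fk k i₀ (w k) = p k x₀ := by rw [← hk]; exact hw k
        have hstep : dist ((yk i₀ z k : H)) (fk k i₀ (w k))
            ≤ (α : ℝ) * (2 * d k + dist z (zs k)) := by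
          have h1 := (hfkLip k i₀).dist_le_mul (fun j => pk k (z j)) (w k)
          refine h1.trans (mul_le_mul_of_nonneg_left ?_ α.2)
          refine (dist_pi_le_iff (by have := hdnn k; positivity)).2 fun j => ?_
          have heq : dist (pk k (z j)) (w k j) = dist (p k (z j)) ((w k j : H)) := rfl
          rw [heq]
          calc dist (p k (z j)) ((w k j : H))
              ≤ dist (p k (z j)) ((z j : H)) + dist ((z j : H)) ((zs k j : H))
                  + dist ((zs k j : H)) ((w k j : H)) := dist_triangle4 _ _ _ _
            _ ≤ d k + dist z (zs k) + d k := by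
                gcongr
                · rw [dist_comm]; exact hpd k (z j)
                · exact (dist_le_pi_dist z (zs k) j)
                · have : dist ((zs k j : H)) ((w k j : H))
                      = dist ((w k j : H)) (q k (w k j)) := dist_comm _ _
                  rw [this]; exact hqd k (w k j)
            _ = 2 * d k + dist z (zs k) := by ring
        calc dist ((yk i₀ z k : H)) y₀
            ≤ dist ((yk i₀ z k : H)) (fk k i₀ (w k)) + dist (fk k i₀ (w k)) y₀ :=
              dist_triangle _ _ _
          _ ≤ (α : ℝ) * (2 * d k + dist z (zs k)) + d k := by
              gcongr
              rw [hk']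
              have : dist (p k x₀) y₀ = dist y₀ (p k x₀) := dist_comm _ _
              rw [this]; exact hpd k x₀
      refine squeeze_zero' (Filter.Eventually.of_forall fun k => dist_nonneg) hbound ?_
      have : Filter.Tendsto (fun k => (α : ℝ) * (2 * d k + dist z (zs k)) + d k) U
          (nhds ((α : ℝ) * (2 * 0 + 0) + 0)) := by
        exact (((hdU.const_mul 2).add hzd).const_mul _).add hdU
      simpa using this
    have := tendsto_nhds_unique (hfl i₀ z) hB
    exact Set.mem_iUnion.2 ⟨i₀, ⟨z, this⟩⟩

/-- Limits (in the Hausdorff metric) of attractors of Banach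
GIFSs of order `m` with at most `n` maps and Lipschitz constant `≤ α < 1`
again carry such a GIFS structure; consequently this class of attractors is
closed in the hyperspace of nonempty compact subsets of a Hilbert space. -/
theorem stmt_17 {H : Type*} [NormedAddCommGroup H] [InnerProductSpace ℝ H]
    [CompleteSpace H]
    (m n : ℕ) (α : NNReal) (hα : α < 1)
    (Kf : ℕ → Set H) (K : Set H)
    (hKfne : ∀ k, (Kf k).Nonempty) (hKfc : ∀ k, IsCompact (Kf k))
    (hKne : K.Nonempty) (hKc : IsCompact K)
    (hconv : Filter.Tendsto (fun k => Metric.hausdorffDist (Kf k) K)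
      Filter.atTop (nhds 0))
    (fk : (k : ℕ) → Fin n → ((Fin m → (Kf k)) → H))
    (hfkLip : ∀ k i, LipschitzWith α (fk k i))
    (hfkmem : ∀ k i x, fk k i x ∈ Kf k)
    (hfkatt : ∀ k, (⋃ i, Set.range (fk k i)) = Kf k) :
    (∃ f : Fin n → ((Fin m → K) → H),
        (∀ i, LipschitzWith α (f i)) ∧ (∀ i x, f i x ∈ K) ∧
          (⋃ i, Set.range (f i)) = K) ∧
      IsClosed {A : NonemptyCompacts H |
        ∃ f : Fin n → ((Fin m → (A : Set H)) → H),
          (∀ i, LipschitzWith α (f i)) ∧ (∀ i x, f i x ∈ (A : Set H)) ∧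
            (⋃ i, Set.range (f i)) = (A : Set H)} := by
  constructor
  · exact gifs_limit m n α Kf K hKfne hKfc hKne hKc hconv fk hfkLip hfkmem hfkatt
  · apply IsSeqClosed.isClosed
    intro A L hA hL
    choose g hg1 hg2 hg3 using hA
    have hdist : Filter.Tendsto (fun k => Metric.hausdorffDist ((A k : Set H)) (L : Set H))
        Filter.atTop (nhds 0) := by
      have := tendsto_iff_dist_tendsto_zero.mp hL
      simpa [NonemptyCompacts.dist_eq] using this
    exact gifs_limit m n α (fun k => (A k : Set H)) (L : Set H)
      (fun k => (A k).nonempty) (fun k => (A k).isCompact)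
      L.nonempty L.isCompact hdist g hg1 hg2 hg3
end
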